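/- For every k ≥ 0 and every finite alphabet Σ, every k-piecewise testable language over Σ is definable by a TL[#←] formula of depth at most k. -/

import Mathlib

mutual
  /-- Formulas of TL[#←]. -/
  inductive TLFormula (σ : Type) : Type
    | sym : σ → TLFormula σ
    | lt : TLTerm σ → TLTerm σ → TLFormula σ
    | not : TLFormula σ → TLFormula σ
    | and : TLFormula σ → TLFormula σ → TLFormula σ
  /-- Terms of TL[#←]. -/
  inductive TLTerm (σ : Type) : Type
    | countL : TLFormula σ → TLTerm σ
    | add : TLTerm σ → TLTerm σ → TLTerm σ
    | one : TLTerm σ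
end

mutual
  /-- Satisfaction `w,i ⊨ φ` (positions are 0-indexed, `0 ≤ i < |w|`). -/
  def TLFormula.sat {σ : Type} [DecidableEq σ] : TLFormula σ → List σ → ℕ → Bool
    | .sym c, w, i => decide (w[i]? = some c)
    | .lt t₁ t₂, w, i => decide (TLTerm.val t₁ w i < TLTerm.val t₂ w i)
    | .not φ, w, i => !(TLFormula.sat φ w i)
    | .and φ₁ φ₂, w, i => TLFormula.sat φ₁ w i && TLFormula.sat φ₂ w i
  /-- Value `t^{w,i}` of a term; `#←[φ]^{w,i}` counts positions `j ≤ i` with `w,j ⊨ φ`. -/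
  def TLTerm.val {σ : Type} [DecidableEq σ] : TLTerm σ → List σ → ℕ → ℕ
    | .countL φ, w, i => ((List.range (i + 1)).filter (fun j => TLFormula.sat φ w j)).length
    | .add t₁ t₂, w, i => TLTerm.val t₁ w i + TLTerm.val t₂ w i
    | .one, _, _ => 1
end

mutual
  /-- Nesting depth of `#←` in a formula. -/
  def TLFormula.depth {σ : Type} : TLFormula σ → ℕ
    | .sym _ => 0
    | .lt t₁ t₂ => max (TLTerm.depth t₁) (TLTerm.depth t₂)
    | .not φ => TLFormula.depth φ
    | .and φ₁ φ₂ => max (TLFormula.depth φ₁) (TLFormula.depth φ₂)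
  /-- Nesting depth of `#←` in a term. -/
  def TLTerm.depth {σ : Type} : TLTerm σ → ℕ
    | .countL φ => TLFormula.depth φ + 1
    | .add t₁ t₂ => max (TLTerm.depth t₁) (TLTerm.depth t₂)
    | .one => 0
end

/-- `φ` defines `L`: a nonempty string is in `L` iff `φ` is satisfied at its last position. -/
def TLFormula.defines {σ : Type} [DecidableEq σ] (φ : TLFormula σ) (L : Set (List σ)) : Prop :=
  ∀ w : List σ, w ≠ [] → (w ∈ L ↔ φ.sat w (w.length - 1) = true)

/-- The J-expression `Σ* σ₁ Σ* σ₂ Σ* ⋯ Σ* σₘ Σ*` determined by the list `[σ₁, …, σₘ]`. -/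
def Jexpr {σ : Type*} : List σ → Language σ
  | [] => ⊤
  | c :: rest => ⊤ * {[c]} * Jexpr rest

/-- Boolean combinations (union, intersection, complement) of a family `G` of sets. -/
inductive BoolComb {α : Type*} (G : Set (Set α)) : Set α → Prop
  | base {s : Set α} : s ∈ G → BoolComb G s
  | compl {s : Set α} : BoolComb G s → BoolComb G sᶜ
  | union {s t : Set α} : BoolComb G s → BoolComb G t → BoolComb G (s ∪ t)
  | inter {s t : Set α} : BoolComb G s → BoolComb G t → BoolComb G (s ∩ t)

/-- A language is `k`-piecewise testable if it is a Boolean combination of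
J-expressions each with at most `k` symbols. -/
def PiecewiseTestable {σ : Type*} (k : ℕ) (L : Language σ) : Prop :=
  BoolComb {M | ∃ l : List σ, l.length ≤ k ∧ M = Jexpr l} L

/-!
A word `w` lies in `Σ*σ₁Σ*⋯Σ*σₘΣ*` iff `σ₁⋯σₘ` is a subsequence of `w`. That `σ₁⋯σₘ` is a
subsequence of the prefix of `w` ending at position `i` says: some position `j ≤ i` carries `σₘ`
and `σ₁⋯σₘ₋₁` is a subsequence of the part strictly before `j`. Both `∃ j ≤ i` and `∃ j' < j`
cost one counting operator, so this unfolds into a formula of depth `m`. Boolean combinations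
need no counting.
-/

namespace List

variable {α : Type*}

theorem concat_sublist_take_iff {w l : List α} {c : α} {j : ℕ} :
    l ++ [c] <+ w.take j ↔ ∃ i < j, w[i]? = some c ∧ l <+ w.take i := by
  constructor
  · intro h
    obtain ⟨r₁, r₂, hw, hl, hc⟩ := append_sublist_iff.1 h
    obtain ⟨u, v, rfl⟩ := append_of_mem (singleton_sublist.1 hc)
    have hlt : (r₁ ++ u).length < j := by
      have := congrArg length hw
      simp only [length_take, length_append, length_cons] at this ⊢
      omega
    refine ⟨(r₁ ++ u).length, hlt, ?_, ?_⟩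
    · rw [← getElem?_take_of_lt hlt, hw]
      simp
    · have : w.take (r₁ ++ u).length = r₁ ++ u := by
        rw [← min_eq_left hlt.le, ← take_take, hw, ← append_assoc, take_left' rfl]
      rw [this]
      exact hl.trans (sublist_append_left r₁ u)
  · rintro ⟨i, hi, hc, hl⟩
    have hsucc : w.take (i + 1) = w.take i ++ [c] := by rw [take_add_one, hc]; rfl
    exact (hl.append (Sublist.refl [c])).trans (hsucc ▸ take_sublist_take_left hi)

theorem cons_sublist_iff_exists_append {c : α} {l w : List α} :
    c :: l <+ w ↔ ∃ u v, w = u ++ c :: v ∧ l <+ v := by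
  constructor
  · intro h
    obtain ⟨r₁, r₂, rfl, hc, hl⟩ := cons_sublist_iff.1 h
    obtain ⟨s, t, rfl⟩ := append_of_mem hc
    exact ⟨s, t ++ r₂, by simp, hl.trans (sublist_append_right t r₂)⟩
  · rintro ⟨u, v, rfl, hl⟩
    exact (hl.cons_cons c).trans (sublist_append_right u _)

end List

theorem mem_Jexpr_iff_sublist {σ : Type*} {l w : List σ} : w ∈ Jexpr l ↔ l.Sublist w := by
  induction l generalizing w with
  | nil => exact iff_of_true trivial (List.nil_sublist w)
  | cons c l ih =>
    simp only [Jexpr, Language.mem_mul, ih, List.cons_sublist_iff_exists_append]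
    constructor
    · rintro ⟨_, ⟨u, -, _, rfl, rfl⟩, v, hv, rfl⟩
      exact ⟨u, v, by simp, hv⟩
    · rintro ⟨u, v, rfl, hv⟩
      exact ⟨u ++ [c], ⟨u, trivial, [c], rfl, rfl⟩, v, hv, by simp⟩

@[simp] theorem TLTerm.val_one {σ : Type} [DecidableEq σ] (w : List σ) (i : ℕ) :
    (TLTerm.one : TLTerm σ).val w i = 1 :=
  rfl

namespace TLFormula

variable {σ : Type}

def top : TLFormula σ := .not (.lt .one .one)

def or (φ ψ : TLFormula σ) : TLFormula σ := .not (.and φ.not ψ.not)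

def existsLe (θ : TLFormula σ) : TLFormula σ := .not (.lt (.countL θ) .one)

/-- Some earlier position satisfies `θ` iff `θ` holds at least twice up to now, or at least once
but not now. -/
def existsLt (θ : TLFormula σ) : TLFormula σ :=
  (TLFormula.lt .one (.countL θ)).or ((existsLe θ).and θ.not)

/-- The list is stored reversed, so that the recursion peels off the *last* symbol of the
pattern, the one located by the outermost counting operator. -/
def sublistBefore : List σ → TLFormula σ
  | [] => top
  | c :: r => existsLt ((sym c).and (sublistBefore r))

def sublistUpTo : List σ → TLFormula σ
  | [] => top
  | c :: r => existsLe ((sym c).and (sublistBefore r))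

@[simp] theorem depth_not (φ : TLFormula σ) : φ.not.depth = φ.depth := rfl

@[simp] theorem depth_and (φ ψ : TLFormula σ) : (φ.and ψ).depth = max φ.depth ψ.depth := rfl

@[simp] theorem depth_or (φ ψ : TLFormula σ) : (φ.or ψ).depth = max φ.depth ψ.depth := rfl

@[simp] theorem depth_existsLe (θ : TLFormula σ) : (existsLe θ).depth = θ.depth + 1 := by
  simp [existsLe, depth, TLTerm.depth]

@[simp] theorem depth_existsLt (θ : TLFormula σ) : (existsLt θ).depth = θ.depth + 1 := by
  simp [existsLt, depth, TLTerm.depth]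

@[simp] theorem depth_sublistBefore (r : List σ) : (sublistBefore r).depth = r.length := by
  induction r with
  | nil => rfl
  | cons c r ih => simp [sublistBefore, ih, depth]

@[simp] theorem depth_sublistUpTo (r : List σ) : (sublistUpTo r).depth = r.length := by
  cases r with
  | nil => rfl
  | cons c r => simp [sublistUpTo, depth]

section Semantics

variable [DecidableEq σ]

@[simp] theorem sat_sym (c : σ) (w : List σ) (i : ℕ) :
    (sym c).sat w i = decide (w[i]? = some c) := rfl

@[simp] theorem sat_lt (t₁ t₂ : TLTerm σ) (w : List σ) (i : ℕ) :
    (lt t₁ t₂).sat w i = decide (t₁.val w i < t₂.val w i) := rfl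

@[simp] theorem sat_not (φ : TLFormula σ) (w : List σ) (i : ℕ) : φ.not.sat w i = !φ.sat w i :=
  rfl

@[simp] theorem sat_and (φ ψ : TLFormula σ) (w : List σ) (i : ℕ) :
    (φ.and ψ).sat w i = (φ.sat w i && ψ.sat w i) := rfl

@[simp] theorem sat_or (φ ψ : TLFormula σ) (w : List σ) (i : ℕ) :
    (φ.or ψ).sat w i = (φ.sat w i || ψ.sat w i) := by
  simp [TLFormula.or]

@[simp] theorem sat_top (w : List σ) (i : ℕ) : (top : TLFormula σ).sat w i = true := by
  simp [top, TLTerm.val]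

theorem val_countL (θ : TLFormula σ) (w : List σ) (j : ℕ) :
    (TLTerm.countL θ).val w j =
      ((List.range j).filter (θ.sat w ·)).length + if θ.sat w j then 1 else 0 := by
  simp only [TLTerm.val, List.range_succ, List.filter_append, List.length_append]
  split <;> simp_all

theorem sat_existsLe (θ : TLFormula σ) (w : List σ) (j : ℕ) :
    (existsLe θ).sat w j = true ↔ ∃ i ≤ j, θ.sat w i = true := by
  simp [existsLe, TLTerm.val]

theorem sat_existsLt (θ : TLFormula σ) (w : List σ) (j : ℕ) :
    (existsLt θ).sat w j = true ↔ ∃ i < j, θ.sat w i = true := by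
  have hbefore : 0 < ((List.range j).filter (θ.sat w ·)).length ↔ ∃ i < j, θ.sat w i = true := by
    simp [List.length_pos_iff_exists_mem]
  rw [← hbefore]
  simp only [existsLt, existsLe, sat_or, sat_and, sat_not, sat_lt, val_countL, TLTerm.val_one]
  generalize ((List.range j).filter (θ.sat w ·)).length = n
  cases θ.sat w j <;> simp
  omega

theorem sat_sublistBefore (r w : List σ) (j : ℕ) :
    (sublistBefore r).sat w j = true ↔ r.reverse.Sublist (w.take j) := by
  induction r generalizing j with
  | nil => simp [sublistBefore]
  | cons c r ih =>
    simp only [sublistBefore, sat_existsLt, sat_and, sat_sym, Bool.and_eq_true,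
      decide_eq_true_eq, ih, List.reverse_cons, List.concat_sublist_take_iff]

theorem sat_sublistUpTo (r w : List σ) (i : ℕ) :
    (sublistUpTo r).sat w i = true ↔ r.reverse.Sublist (w.take (i + 1)) := by
  cases r with
  | nil => simp [sublistUpTo]
  | cons c r =>
    simp only [sublistUpTo, sat_existsLe, sat_and, sat_sym, Bool.and_eq_true,
      decide_eq_true_eq, sat_sublistBefore, List.reverse_cons, List.concat_sublist_take_iff,
      Nat.lt_succ_iff]

theorem defines_sublistUpTo_reverse (l : List σ) :
    (sublistUpTo l.reverse).defines (Jexpr l) := by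
  intro w hw
  rw [sat_sublistUpTo, List.reverse_reverse, Nat.sub_add_cancel (List.length_pos_iff.2 hw),
    List.take_length]
  exact mem_Jexpr_iff_sublist

variable {φ ψ : TLFormula σ} {L M : Set (List σ)}

theorem defines.compl (h : φ.defines L) : φ.not.defines Lᶜ := fun w hw => by
  simp [h w hw]

theorem defines.union (h₁ : φ.defines L) (h₂ : ψ.defines M) : (φ.or ψ).defines (L ∪ M) :=
  fun w hw => by simp [h₁ w hw, h₂ w hw]

theorem defines.inter (h₁ : φ.defines L) (h₂ : ψ.defines M) : (φ.and ψ).defines (L ∩ M) :=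
  fun w hw => by simp [h₁ w hw, h₂ w hw]

end Semantics

end TLFormula

/-- Every `k`-piecewise testable language over a finite alphabet is definable
by a TL[#←] formula of depth at most `k`. -/
theorem stmt1 (σ : Type) [Fintype σ] [DecidableEq σ] (k : ℕ) (L : Language σ)
    (hL : PiecewiseTestable k L) :
    ∃ φ : TLFormula σ, φ.depth ≤ k ∧ φ.defines L := by
  induction hL with
  | base h =>
    obtain ⟨l, hl, rfl⟩ := h
    exact ⟨_, by simpa using hl, TLFormula.defines_sublistUpTo_reverse l⟩
  | compl _ ih =>
    obtain ⟨φ, hφ, h⟩ := ih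
    exact ⟨φ.not, hφ, h.compl⟩
  | union _ _ ih₁ ih₂ =>
    obtain ⟨φ, hφ, h₁⟩ := ih₁
    obtain ⟨ψ, hψ, h₂⟩ := ih₂
    exact ⟨φ.or ψ, max_le hφ hψ, h₁.union h₂⟩
  | inter _ _ ih₁ ih₂ =>
    obtain ⟨φ, hφ, h₁⟩ := ih₁
    obtain ⟨ψ, hψ, h₂⟩ := ih₂
    exact ⟨φ.and ψ, max_le hφ hψ, h₁.inter h₂⟩
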